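/- arXiv:2006.14097 — 2 statements merged into one kernel-verified Lean document; each statement's English description precedes it below -/
import Mathlib

section
/- Fisher–Jerome-type theorem on the torus (Lemma 4.2 of the paper). Let d ≥ 1 and let F ⊂ ℤᵈ be a finite symmetric set (F = −F). Let N ⊂ C(𝕋ᵈ, ℝ) be the (finite-dimensional) real span of the trigonometric functions x ↦ cos⟨k, x⟩ and x ↦ sin⟨k, x⟩ for k ∈ F, with N₀ = dim N, and let W = { w ∈ C(𝕋ᵈ, ℝ)' : w(φ) = 0 for every φ ∈ N }. Let M ≥ N₀ and let (f₁, q₁), …, (f_M, q_M) be linearly independent pairs with each f_m ∈ C(𝕋ᵈ, ℝ) satisfying ∫ f_m(x) cos⟨k,x⟩ dx = ∫ f_m(x) sin⟨k,x⟩ dx = 0 for all k ∈ F, and each q_m ∈ N; assume that the only p ∈ N with ⟨q_m, p⟩ = 0 for all m = 1, …, M is p = 0, where ⟨·,·⟩ is the normalized L² inner product ⟨g, h⟩ = (2π)^{-d} ∫_{𝕋ᵈ} g h. Let z₀ ∈ ℝ^M be feasible, i.e. there exists (w, p) ∈ W × N with w(f_m) + ⟨q_m, p⟩ = (z₀)_m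 for all m. Then the set of minimizers of ‖w‖ over { (w, p) ∈ W × N : w(f_m) + ⟨q_m, p⟩ = (z₀)_m for all m = 1, …, M } is nonempty, convex, and compact for the product of the weak* topology on C(𝕋ᵈ, ℝ)' with the (unique) topology of N; moreover every extreme point (w_ext, p_ext) of this set satisfies w_ext = Σ_{k=1}^{K} a_k δ_{x_k} for some K ≤ M, real weights a₁, …, a_K, and distinct points x₁, …, x_K ∈ 𝕋ᵈ. -/
open scoped Real
open Filter NormedSpace MeasureTheory

instance : Fact ((0 : ℝ) < 2 * π) := ⟨by positivity⟩

/-- The `d`-dimensional torus `(ℝ/2πℤ)ᵈ`. -/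
abbrev Torus (d : ℕ) := Fin d → AddCircle (2 * π)

/-- The continuous function `x ↦ cos⟨k, x⟩` on the torus. -/
noncomputable def trigCos {d : ℕ} (k : Fin d → ℤ) : C(Torus d, ℝ) :=
  ⟨fun x => (∏ i, fourier (k i) (x i)).re,
    Complex.continuous_re.comp (continuous_finset_prod _ fun i _ =>
      (fourier (k i)).continuous.comp (continuous_apply i))⟩

/-- The continuous function `x ↦ sin⟨k, x⟩` on the torus. -/
noncomputable def trigSin {d : ℕ} (k : Fin d → ℤ) : C(Torus d, ℝ) :=
  ⟨fun x => (∏ i, fourier (k i) (x i)).im,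
    Complex.continuous_im.comp (continuous_finset_prod _ fun i _ =>
      (fourier (k i)).continuous.comp (continuous_apply i))⟩

/-- The Dirac evaluation functional `δ_x : φ ↦ φ(x)` as an element of the dual of
`C(𝕋ᵈ, ℝ)`. -/
noncomputable def dirac {d : ℕ} (x : Torus d) : StrongDual ℝ C(Torus d, ℝ) :=
  ContinuousMap.evalCLM ℝ x

/-- The normalized `L²` inner product `⟨g, h⟩ = (2π)^{-d} ∫ g h` on `C(𝕋ᵈ, ℝ)`. -/
noncomputable def nip {d : ℕ} (g h : C(Torus d, ℝ)) : ℝ :=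
  ((2 * π) ^ d)⁻¹ * ∫ x : Torus d, g x * h x

/-!
Sublevel sets `{‖w‖ ≤ r}` of the feasible set are weak*-compact: the `w`-part by Banach–Alaoglu,
and the `p`-part because `p ↦ (⟨q_m, p⟩)_m` is injective on the finite-dimensional `N`, so the
constraints bound `p`. The norm is weak*-lower semicontinuous, so a minimizer exists, and the set
of minimizers is the sublevel set at the minimal value, hence convex and compact.

Let `(w, p)` be an extreme minimizer and suppose the support of `w` contains `M + 1` points.
Disjointly supported bumps `b_i` at these points give functionals `w(b_i ·)`, and a nontrivial
combination `ν = w(σ ·)`, `σ = ∑ s_i b_i`, `|σ| ≤ 1`, is admissible: it annihilates `N` and its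
values on the `f_m` are `(⟨q_m, ρ⟩)_m` for some `ρ ∈ N`. Indeed admissibility is
`dim N + (M - dim N) = M` linear conditions. Then `(w ± ν, p ∓ ρ)` are feasible and, as
`1 ± σ ≥ 0`, `‖w + ν‖ + ‖w - ν‖ ≤ 2‖w‖`, so both are minimizers with midpoint `(w, p)`; hence
`ν = 0`, which fails on a test function near a point where `s_i ≠ 0`. So the support of `w` has
at most `M` points, and a functional supported on a finite set is a combination of Dirac masses.
-/

open Set Function Topology Module

section FeasibleSet

variable {E : Type*} [NormedAddCommGroup E] [NormedSpace ℝ E] {M : ℕ}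

def feasibleSet (N : Submodule ℝ E) (f : Fin M → E) (B : E →ₗ[ℝ] Fin M → ℝ) (z : Fin M → ℝ) :
    Set (StrongDual ℝ E × E) :=
  {wp | (∀ φ ∈ N, wp.1 φ = 0) ∧ wp.2 ∈ N ∧ ∀ m, wp.1 (f m) + B wp.2 m = z m}

def normMinimizers (S : Set (StrongDual ℝ E × E)) : Set (StrongDual ℝ E × E) :=
  {wp ∈ S | ∀ wp' ∈ S, ‖wp.1‖ ≤ ‖wp'.1‖}

theorem normMinimizers_eq_of_mem {S : Set (StrongDual ℝ E × E)} {wp₀ : StrongDual ℝ E × E}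
    (h : wp₀ ∈ normMinimizers S) : normMinimizers S = {wp ∈ S | ‖wp.1‖ ≤ ‖wp₀.1‖} :=
  Set.ext fun _ => ⟨fun hwp => ⟨hwp.1, hwp.2 _ h.1⟩,
    fun hwp => ⟨hwp.1, fun _ hwp' => hwp.2.trans (h.2 _ hwp')⟩⟩

theorem convex_normMinimizers {S : Set (StrongDual ℝ E × E)} (hS : Convex ℝ S) :
    Convex ℝ (normMinimizers S) := by
  rcases (normMinimizers S).eq_empty_or_nonempty with h | ⟨wp₀, h⟩
  · exact h ▸ convex_empty
  · rw [normMinimizers_eq_of_mem h]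
    exact (((convexOn_norm convex_univ).comp_linearMap (LinearMap.fst ℝ _ E)).subset
      (subset_univ _) hS).convex_le _

theorem StrongDual.norm_le_of_apply_le {u : StrongDual ℝ E} {C : ℝ} (hC : 0 ≤ C)
    (h : ∀ x, ‖x‖ ≤ 1 → u x ≤ C) : ‖u‖ ≤ C :=
  u.opNorm_le_of_unit_norm hC fun x hx => by
    rw [Real.norm_eq_abs, abs_le]
    exact ⟨by linarith [h (-x) (by simp [hx]), map_neg u x], h x hx.le⟩

theorem StrongDual.norm_add_norm_le_of_apply_add_apply_le {u v : StrongDual ℝ E} {C : ℝ}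
    (h : ∀ x y, ‖x‖ ≤ 1 → ‖y‖ ≤ 1 → u x + v y ≤ C) : ‖u‖ + ‖v‖ ≤ C := by
  have hu : ∀ y, ‖y‖ ≤ 1 → ‖u‖ ≤ C - v y := fun y hy =>
    norm_le_of_apply_le (by simpa using h 0 y (by simp) hy) fun x hx => by linarith [h x y hx hy]
  have hv : ‖v‖ ≤ C - ‖u‖ :=
    norm_le_of_apply_le (by simpa using hu 0 (by simp)) fun y hy => by linarith [hu y hy]
  linarith

theorem lowerSemicontinuous_norm_toStrongDual_fst :
    LowerSemicontinuous fun ωp : WeakDual ℝ E × E => ‖WeakDual.toStrongDual ωp.1‖ :=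
  lowerSemicontinuous_iff_isClosed_preimage.2 fun r => by
    simpa [Set.preimage, dist_zero_right] using
      (WeakDual.isClosed_closedBall (0 : StrongDual ℝ E) r).preimage (continuous_fst (Y := E))

variable {N : Submodule ℝ E} {f : Fin M → E} {B : E →ₗ[ℝ] Fin M → ℝ} {z : Fin M → ℝ}

theorem convex_feasibleSet : Convex ℝ (feasibleSet N f B z) := by
  rintro ⟨w₁, p₁⟩ ⟨hw₁, hp₁, hc₁⟩ ⟨w₂, p₂⟩ ⟨hw₂, hp₂, hc₂⟩ a b - - hab
  refine ⟨fun φ hφ => ?_, N.add_mem (N.smul_mem a hp₁) (N.smul_mem b hp₂), fun m => ?_⟩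
  · simp [hw₁ φ hφ, hw₂ φ hφ]
  · simp only [Prod.fst_add, Prod.smul_fst, Prod.snd_add, Prod.smul_snd, map_add, map_smul,
      add_apply, smul_apply, Pi.add_apply, Pi.smul_apply, smul_eq_mul]
    linear_combination a * hc₁ m + b * hc₂ m + z m * hab

theorem exists_norm_snd_le_of_mem_feasibleSet [FiniteDimensional ℝ N]
    (hB : Disjoint N (LinearMap.ker B)) (r : ℝ) :
    ∃ R, ∀ wp ∈ feasibleSet N f B z, ‖wp.1‖ ≤ r → ‖wp.2‖ ≤ R := by
  obtain ⟨K, -, hK⟩ := (B.domRestrict N).exists_antilipschitzWith <|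
    LinearMap.ker_eq_bot.2 (LinearMap.injective_domRestrict_iff.2 hB)
  refine ⟨K * (‖z‖ + r * ‖f‖), fun ⟨w, p⟩ ⟨_, hp, hc⟩ hr => ?_⟩
  have hr₀ : 0 ≤ r := (norm_nonneg _).trans hr
  have hBp : B p = z - fun m => w (f m) := funext fun m => by simp [← hc m]
  have hwf : ‖fun m => w (f m)‖ ≤ r * ‖f‖ := (pi_norm_le_iff_of_nonneg (by positivity)).2
    fun m => (w.le_opNorm (f m)).trans (mul_le_mul hr (norm_le_pi_norm f m) (norm_nonneg _) hr₀)
  calc ‖p‖ = ‖(⟨p, hp⟩ : N)‖ := rfl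
    _ ≤ K * ‖B p‖ := ZeroHomClass.bound_of_antilipschitz (B.domRestrict N) hK ⟨p, hp⟩
    _ ≤ K * (‖z‖ + r * ‖f‖) := by
      gcongr
      rw [hBp]
      exact (norm_sub_le _ _).trans (by gcongr)

theorem isCompact_image_toWeakDual_feasibleSet [FiniteDimensional ℝ N]
    (hB : Disjoint N (LinearMap.ker B)) (r : ℝ) :
    IsCompact ((fun wp : StrongDual ℝ E × E => (StrongDual.toWeakDual wp.1, wp.2)) ''
      {wp ∈ feasibleSet N f B z | ‖wp.1‖ ≤ r}) := by
  obtain ⟨R, hR⟩ := exists_norm_snd_le_of_mem_feasibleSet (f := f) (z := z) hB r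
  -- work in `WeakDual ℝ E × N`, where the constraint is continuous
  set C : Set (WeakDual ℝ E × N) := {ωp | ‖WeakDual.toStrongDual ωp.1‖ ≤ r ∧
    (∀ φ ∈ N, ωp.1 φ = 0) ∧ ∀ m, ωp.1 (f m) + B.domRestrict N ωp.2 m = z m}
  have himage : (fun wp : StrongDual ℝ E × E => (StrongDual.toWeakDual wp.1, wp.2)) ''
      {wp ∈ feasibleSet N f B z | ‖wp.1‖ ≤ r} = Prod.map id Subtype.val '' C := by
    ext ⟨ω, p⟩
    constructor
    · rintro ⟨⟨w, p⟩, ⟨⟨hw, hp, hc⟩, hr⟩, he⟩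
      obtain ⟨rfl, rfl⟩ := Prod.ext_iff.1 he
      exact ⟨(StrongDual.toWeakDual w, ⟨p, hp⟩), ⟨hr, hw, hc⟩, rfl⟩
    · rintro ⟨⟨ω, p⟩, ⟨hr, hw, hc⟩, he⟩
      exact ⟨(WeakDual.toStrongDual ω, p), ⟨⟨hw, p.2, hc⟩, hr⟩, he⟩
  have hclosed : IsClosed C := by
    have hev : ∀ x : E, Continuous fun ωp : WeakDual ℝ E × N => ωp.1 x := fun x =>
      (WeakDual.eval_continuous x).comp continuous_fst
    have hBN : Continuous fun ωp : WeakDual ℝ E × N => B.domRestrict N ωp.2 :=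
      (B.domRestrict N).continuous_of_finiteDimensional.comp continuous_snd
    simp only [C, ofPred_and, ofPred_forall]
    refine .inter ?_ (.inter ?_ ?_)
    · simpa [Set.preimage, dist_zero_right] using
        (WeakDual.isClosed_closedBall (0 : StrongDual ℝ E) r).preimage (continuous_fst (Y := N))
    · exact isClosed_iInter fun φ => isClosed_iInter fun _ => isClosed_eq (hev φ) continuous_const
    · exact isClosed_iInter fun m =>
        isClosed_eq ((hev (f m)).add ((continuous_apply m).comp hBN)) continuous_const
  have hsub : C ⊆ (WeakDual.toStrongDual ⁻¹' Metric.closedBall 0 r) ×ˢ Metric.closedBall 0 R :=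
    fun ⟨ω, p⟩ ⟨hr, hw, hc⟩ => ⟨by simpa using hr, by
      simpa using hR (WeakDual.toStrongDual ω, p) ⟨hw, p.2, hc⟩ hr⟩
  rw [himage]
  exact (((WeakDual.isCompact_closedBall 0 r).prod (isCompact_closedBall 0 R)).of_isClosed_subset
    hclosed hsub).image (continuous_id.prodMap continuous_subtype_val)

theorem nonempty_normMinimizers_feasibleSet [FiniteDimensional ℝ N]
    (hB : Disjoint N (LinearMap.ker B)) (hS : (feasibleSet N f B z).Nonempty) :
    (normMinimizers (feasibleSet N f B z)).Nonempty := by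
  obtain ⟨wp₁, hwp₁⟩ := hS
  set Φ := fun wp : StrongDual ℝ E × E => (StrongDual.toWeakDual wp.1, wp.2)
  have hK : IsCompact (Φ '' {wp ∈ feasibleSet N f B z | ‖wp.1‖ ≤ ‖wp₁.1‖}) :=
    isCompact_image_toWeakDual_feasibleSet hB _
  obtain ⟨-, ⟨wp₀, ⟨hwp₀, -⟩, rfl⟩, hmin⟩ := LowerSemicontinuousOn.exists_isMinOn
    (nonempty_of_mem (mem_image_of_mem Φ (show wp₁ ∈ {wp ∈ feasibleSet N f B z | ‖wp.1‖ ≤ ‖wp₁.1‖}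
      from ⟨hwp₁, le_rfl⟩))) hK
    (lowerSemicontinuous_norm_toStrongDual_fst.lowerSemicontinuousOn _)
  refine ⟨wp₀, hwp₀, fun wp hwp => ?_⟩
  rcases le_total ‖wp.1‖ ‖wp₁.1‖ with h | h
  · exact isMinOn_iff.1 hmin _ ⟨wp, ⟨hwp, h⟩, rfl⟩
  · exact (isMinOn_iff.1 hmin _ ⟨wp₁, ⟨hwp₁, le_rfl⟩, rfl⟩).trans h

variable (N f B) in
noncomputable def admissibilityDefect :
    StrongDual ℝ E →ₗ[ℝ] Dual ℝ N × ((Fin M → ℝ) ⧸ N.map B) :=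
  (LinearMap.lcomp ℝ ℝ N.subtype ∘ₗ ContinuousLinearMap.coeLM ℝ).prod
    ((N.map B).mkQ ∘ₗ LinearMap.pi fun m => (ContinuousLinearMap.apply ℝ ℝ (f m)).toLinearMap)

variable (N f B) in
noncomputable def admissibleDirections : Submodule ℝ (StrongDual ℝ E) :=
  LinearMap.ker (admissibilityDefect N f B)

theorem mem_admissibleDirections {ν : StrongDual ℝ E} :
    ν ∈ admissibleDirections N f B ↔ (∀ φ ∈ N, ν φ = 0) ∧ ∃ ρ ∈ N, B ρ = fun m => ν (f m) := by
  simp [admissibleDirections, admissibilityDefect, LinearMap.ext_iff, funext_iff]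

theorem exists_ne_zero_sum_smul_mem_admissibleDirections [FiniteDimensional ℝ N]
    (hB : Disjoint N (LinearMap.ker B)) {ι : Type*} [Fintype ι] (hι : M < Fintype.card ι)
    (ν : ι → StrongDual ℝ E) :
    ∃ s : ι → ℝ, s ≠ 0 ∧ ∑ i, s i • ν i ∈ admissibleDirections N f B := by
  have hmap : finrank ℝ (N.map B) = finrank ℝ N := by
    rw [← LinearMap.range_domRestrict]
    exact LinearMap.finrank_range_of_inj (LinearMap.injective_domRestrict_iff.2 hB)
  have hcodim : finrank ℝ (Dual ℝ N × ((Fin M → ℝ) ⧸ N.map B)) = M := by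
    have := (N.map B).finrank_quotient_add_finrank
    rw [finrank_fin_fun, hmap] at this
    rw [finrank_prod, Subspace.dual_finrank_eq]
    omega
  obtain ⟨s, hs, hs₀⟩ := Submodule.ne_bot_iff _ |>.1 <| LinearMap.ker_ne_bot_of_finrank_lt
    (f := admissibilityDefect N f B ∘ₗ Fintype.linearCombination ℝ ν) (by simpa [hcodim])
  exact ⟨s, hs₀, by simpa [admissibleDirections, Fintype.linearCombination_apply] using hs⟩

theorem eq_zero_of_mem_extremePoints_normMinimizers {wp : StrongDual ℝ E × E}
    (hwp : wp ∈ extremePoints ℝ (normMinimizers (feasibleSet N f B z)))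
    {ν : StrongDual ℝ E} (hν : ν ∈ admissibleDirections N f B)
    (hnorm : ‖wp.1 + ν‖ + ‖wp.1 - ν‖ ≤ 2 * ‖wp.1‖) : ν = 0 := by
  obtain ⟨⟨⟨hw, hp, hc⟩, hmin⟩, hext⟩ := hwp
  obtain ⟨hνN, ρ, hρ, hBρ⟩ := mem_admissibleDirections.1 hν
  have hplus : (wp.1 + ν, wp.2 - ρ) ∈ feasibleSet N f B z :=
    ⟨fun φ hφ => by simp [hw φ hφ, hνN φ hφ], N.sub_mem hp hρ, fun m => by
      simp [← hc m, ← congrFun hBρ m]⟩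
  have hminus : (wp.1 - ν, wp.2 + ρ) ∈ feasibleSet N f B z :=
    ⟨fun φ hφ => by simp [hw φ hφ, hνN φ hφ], N.add_mem hp hρ, fun m => by
      simp [← hc m, ← congrFun hBρ m]⟩
  have h₁ := hmin _ hplus
  have h₂ := hmin _ hminus
  have hmem : ∀ wp' ∈ feasibleSet N f B z, ‖wp'.1‖ ≤ ‖wp.1‖ →
      wp' ∈ normMinimizers (feasibleSet N f B z) :=
    fun wp' h h' => ⟨h, fun _ h'' => h'.trans (hmin _ h'')⟩
  have hseg : wp ∈ openSegment ℝ (wp.1 + ν, wp.2 - ρ) (wp.1 - ν, wp.2 + ρ) :=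
    ⟨1 / 2, 1 / 2, by norm_num, by norm_num, by norm_num,
      Prod.ext (by simp; module) (by simp; module)⟩
  have := hext (hmem _ hplus (by dsimp only at h₁ h₂ ⊢; linarith)) (hmem _ hminus
    (by dsimp only at h₁ h₂ ⊢; linarith)) hseg
  simpa using congrArg Prod.fst this

end FeasibleSet

theorem Set.exists_injective_fin_of_forall_card_le {α : Type*} {D : Set α} {M : ℕ}
    (h : ∀ t : Finset α, ↑t ⊆ D → t.card ≤ M) :
    ∃ K ≤ M, ∃ x : Fin K → α, Injective x ∧ range x = D := by
  have hD : D.Finite := not_infinite.1 fun hinf => by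
    obtain ⟨t, ht, hcard⟩ := hinf.exists_subset_card_eq (M + 1)
    linarith [h t ht]
  obtain ⟨K, x, hx⟩ := hD.fin_embedding
  exact ⟨K, by simpa using h (Finset.univ.map x) (by simp [hx]), x, x.injective, hx⟩

section DualSupport

variable {X : Type*} [TopologicalSpace X]

def dualSupport [CompactSpace X] (w : StrongDual ℝ C(X, ℝ)) : Set X :=
  {x | ∀ U ∈ 𝓝 x, ∃ g : C(X, ℝ), tsupport g ⊆ U ∧ w g ≠ 0}

variable [CompactSpace X]

theorem norm_add_comp_mul_add_norm_sub_comp_mul_le (w : StrongDual ℝ C(X, ℝ)) {σ : C(X, ℝ)}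
    (hσ : ‖σ‖ ≤ 1) :
    ‖w + w.comp (ContinuousLinearMap.mul ℝ C(X, ℝ) σ)‖ +
      ‖w - w.comp (ContinuousLinearMap.mul ℝ C(X, ℝ) σ)‖ ≤ 2 * ‖w‖ := by
  refine StrongDual.norm_add_norm_le_of_apply_add_apply_le fun g g' hg hg' => ?_
  have hpt : ‖(1 + σ) * g + (1 - σ) * g'‖ ≤ 2 := (ContinuousMap.norm_le _ zero_le_two).2 fun y => by
    have hσy := abs_le.1 ((σ.norm_coe_le_norm y).trans hσ)
    have hgy := abs_le.1 ((g.norm_coe_le_norm y).trans hg)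
    have hg'y := abs_le.1 ((g'.norm_coe_le_norm y).trans hg')
    simp only [ContinuousMap.add_apply, ContinuousMap.mul_apply, ContinuousMap.sub_apply,
      ContinuousMap.one_apply, Real.norm_eq_abs, abs_le]
    constructor <;> nlinarith [mul_nonneg (by linarith : 0 ≤ 1 + σ y) (by linarith : 0 ≤ 1 - g y),
      mul_nonneg (by linarith : 0 ≤ 1 + σ y) (by linarith : 0 ≤ 1 + g y),
      mul_nonneg (by linarith : 0 ≤ 1 - σ y) (by linarith : 0 ≤ 1 - g' y),
      mul_nonneg (by linarith : 0 ≤ 1 - σ y) (by linarith : 0 ≤ 1 + g' y)]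
  calc _ = w ((1 + σ) * g + (1 - σ) * g') := by simp [add_mul, sub_mul]
    _ ≤ ‖w‖ * ‖(1 + σ) * g + (1 - σ) * g'‖ := (le_abs_self _).trans (w.le_opNorm _)
    _ ≤ 2 * ‖w‖ := by nlinarith [norm_nonneg w]

theorem norm_sum_smul_le_of_pairwise_disjoint_support {ι : Type*} [Fintype ι] {b : ι → C(X, ℝ)}
    (hb : ∀ i y, b i y ∈ Icc (0 : ℝ) 1) (hd : Pairwise (Disjoint on fun i => support (b i)))
    (s : ι → ℝ) : ‖∑ i, s i • b i‖ ≤ ‖s‖ :=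
  (ContinuousMap.norm_le _ (norm_nonneg s)).2 fun y => by
    by_cases hy : ∃ i, b i y ≠ 0
    · obtain ⟨i, hi⟩ := hy
      have hj : ∀ j ≠ i, b j y = 0 := fun j hji => by
        by_contra h
        exact disjoint_left.1 (hd hji) h hi
      rw [ContinuousMap.sum_apply, Finset.sum_eq_single i (fun j _ hji => by simp [hj j hji])
        (by simp)]
      simpa [abs_mul, abs_of_nonneg (hb i y).1] using
        mul_le_mul (norm_le_pi_norm s i) (hb i y).2 (hb i y).1 (norm_nonneg s)
    · push Not at hy
      simp [hy]

variable [T2Space X] {w : StrongDual ℝ C(X, ℝ)}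

theorem apply_eq_zero_of_disjoint_dualSupport {g : C(X, ℝ)}
    (hg : Disjoint (tsupport g) (dualSupport w)) : w g = 0 := by
  have hnull : ∀ y ∈ tsupport g, ∃ U, IsOpen U ∧ y ∈ U ∧
      ∀ h : C(X, ℝ), tsupport h ⊆ U → w h = 0 := by
    intro y hy
    have : y ∉ dualSupport w := hg.notMem_of_mem_left hy
    simp only [dualSupport, mem_ofPred_eq, not_forall, not_exists, not_and, not_not] at this
    obtain ⟨U, hU, hnull⟩ := this
    exact ⟨interior U, isOpen_interior, mem_interior_iff_mem_nhds.2 hU,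
      fun h hh => hnull h (hh.trans interior_subset)⟩
  choose! U hUo hyU hUnull using hnull
  have hK : IsCompact (tsupport g) := (isClosed_tsupport g).isCompact
  obtain ⟨t, htK, hcover⟩ := hK.elim_nhds_subcover U fun y hy => (hUo y hy).mem_nhds (hyU y hy)
  let V : Fin t.card → Set X := fun i => U (t.equivFin.symm i)
  have hVo : ∀ i, IsOpen (V i) := fun i => hUo _ (htK _ (t.equivFin.symm i).2)
  have hKV : tsupport g ⊆ ⋃ i, V i := fun y hy => by
    obtain ⟨x, hx, hyx⟩ := mem_iUnion₂.1 (hcover hy)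
    exact mem_iUnion.2 ⟨t.equivFin ⟨x, hx⟩, by simpa [V] using hyx⟩
  obtain ⟨ρ, hρV, hρ, -, -⟩ := exists_continuous_sum_one_of_isOpen_isCompact hVo hK hKV
  have hg_eq : g = ∑ i, ρ i * g := by
    ext y
    by_cases hy : y ∈ tsupport g
    · simpa [← Finset.sum_mul] using congr($(hρ hy) * g y).symm
    · simp [image_eq_zero_of_notMem_tsupport hy]
  rw [hg_eq, map_sum]
  exact Finset.sum_eq_zero fun i _ =>
    hUnull _ (htK _ (t.equivFin.symm i).2) _ (tsupport_mul_subset_left.trans (hρV i))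

theorem apply_eq_zero_of_eqOn_dualSupport {h : C(X, ℝ)} (hh : EqOn h 0 (dualSupport w)) :
    w h = 0 := by
  refine abs_nonpos_iff.1 <| le_of_forall_pos_le_add fun δ hδ => ?_
  set ε := δ / (‖w‖ + 1)
  have hε : 0 < ε := by positivity
  -- cut `h` at height `ε`; what is left over is supported where `|h| ≥ ε`, away from the support
  let c : C(X, ℝ) := ⟨fun x => max (-ε) (min ε (h x)), by fun_prop⟩
  have hc : ‖c‖ ≤ ε := (ContinuousMap.norm_le _ hε.le).2 fun x => by
    simp only [c, ContinuousMap.coe_mk, Real.norm_eq_abs, abs_le]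
    constructor <;> [exact le_max_left _ _; exact max_le (by linarith) (min_le_left _ _)]
  have hsupp : tsupport (h - c) ⊆ {x | ε ≤ |h x|} :=
    closure_minimal (fun x hx => by
      by_contra hlt
      simp only [mem_ofPred_eq, not_le, abs_lt] at hlt
      simp [c, min_eq_right hlt.2.le, max_eq_right hlt.1.le] at hx)
      (isClosed_le continuous_const (by fun_prop))
  have hrest : w (h - c) = 0 := apply_eq_zero_of_disjoint_dualSupport <|
    disjoint_left.2 fun x hx hxD => by
      have := hsupp hx
      simp [mem_ofPred_eq, hh hxD] at this
      linarith
  calc |w h| = |w c| := by rw [← sub_add_cancel h c, map_add, hrest, zero_add]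
    _ ≤ ‖w‖ * ‖c‖ := w.le_opNorm c
    _ ≤ ‖w‖ * ε := by gcongr
    _ ≤ 0 + δ := by
      rw [zero_add, mul_div_assoc', div_le_iff₀ (by positivity)]
      nlinarith [norm_nonneg w]

theorem exists_eq_sum_smul_evalCLM_of_dualSupport_subset {K : ℕ} {x : Fin K → X}
    (hx : Injective x) (hw : dualSupport w ⊆ range x) :
    ∃ a : Fin K → ℝ, w = ∑ k, a k • ContinuousMap.evalCLM ℝ (x k) := by
  have hφ : ∀ k, ∃ φ : C(X, ℝ), ∀ j, φ (x j) = if j = k then 1 else 0 := by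
    intro k
    obtain ⟨φ, hφ₀, hφ₁, -⟩ := exists_continuous_zero_one_of_isClosed
      (toFinite (x '' {j | j ≠ k})).isClosed isClosed_singleton
      (disjoint_singleton_right.2 fun ⟨j, hj, hjk⟩ => hj (hx hjk))
    refine ⟨φ, fun j => ?_⟩
    split_ifs with h
    · exact h ▸ hφ₁ rfl
    · exact hφ₀ ⟨j, h, rfl⟩
  choose φ hφ using hφ
  refine ⟨fun k => w (φ k), ContinuousLinearMap.ext fun g => ?_⟩
  have := apply_eq_zero_of_eqOn_dualSupport (w := w) (h := g - ∑ k, g (x k) • φ k) fun y hy => by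
    obtain ⟨j, rfl⟩ := hw hy
    simp [hφ]
  simpa [sub_eq_zero, mul_comm] using this

theorem exists_bumps_of_subset_dualSupport {t : Finset X} (ht : ↑t ⊆ dualSupport w) :
    ∃ b g : t → C(X, ℝ), (∀ i y, b i y ∈ Icc (0 : ℝ) 1) ∧
      Pairwise (Disjoint on fun i => support (b i)) ∧ (∀ i, b i * g i = g i) ∧
      (∀ i j, i ≠ j → b j * g i = 0) ∧ ∀ i, w (g i) ≠ 0 := by
  obtain ⟨U, hU, hUd⟩ := t.finite_toSet.t2_separation
  have hdisj : Pairwise (Disjoint on fun i : t => U i) := fun i j hij =>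
    hUd i.2 j.2 (Subtype.coe_injective.ne hij)
  have : ∀ i : t, ∃ g : C(X, ℝ), tsupport g ⊆ U i ∧ w g ≠ 0 := fun i =>
    ht i.2 (U i) ((hU i).2.mem_nhds (hU i).1)
  choose g hgU hg using this
  have : ∀ i : t, ∃ b : C(X, ℝ), EqOn b 0 (U i)ᶜ ∧ EqOn b 1 (tsupport (g i)) ∧
      ∀ y, b y ∈ Icc (0 : ℝ) 1 := fun i =>
    exists_continuous_zero_one_of_isClosed (hU i).2.isClosed_compl (isClosed_tsupport _)
      (disjoint_compl_left_iff_subset.2 (hgU i))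
  choose b hb₀ hb₁ hb using this
  have hbU : ∀ i, support (b i) ⊆ U i := fun i y hy => by_contra fun h => hy (hb₀ i h)
  refine ⟨b, g, hb, fun i j hij => (hdisj hij).mono (hbU i) (hbU j), fun i => ?_,
    fun i j hij => ?_, hg⟩
  · ext y
    by_cases hy : y ∈ tsupport (g i)
    · simp [hb₁ i hy]
    · simp [image_eq_zero_of_notMem_tsupport hy]
  · ext y
    by_cases hy : y ∈ tsupport (g i)
    · simp [hb₀ j (disjoint_left.1 (hdisj hij) (hgU i hy))]
    · simp [image_eq_zero_of_notMem_tsupport hy]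

theorem card_le_of_subset_dualSupport {M : ℕ} {N : Submodule ℝ C(X, ℝ)} [FiniteDimensional ℝ N]
    {f : Fin M → C(X, ℝ)} {B : C(X, ℝ) →ₗ[ℝ] Fin M → ℝ} {z : Fin M → ℝ}
    (hB : Disjoint N (LinearMap.ker B)) {wp : StrongDual ℝ C(X, ℝ) × C(X, ℝ)}
    (hwp : wp ∈ extremePoints ℝ (normMinimizers (feasibleSet N f B z))) {t : Finset X}
    (ht : ↑t ⊆ dualSupport wp.1) : t.card ≤ M := by
  by_contra! hM
  obtain ⟨b, g, hb, hbd, hbg, hbg', hg⟩ := exists_bumps_of_subset_dualSupport ht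
  let μ : C(X, ℝ) →L[ℝ] StrongDual ℝ C(X, ℝ) :=
    ContinuousLinearMap.compL ℝ C(X, ℝ) C(X, ℝ) ℝ wp.1 ∘L ContinuousLinearMap.mul ℝ C(X, ℝ)
  obtain ⟨s, hs, hsA⟩ := exists_ne_zero_sum_smul_mem_admissibleDirections (f := f) hB
    (by simpa using hM) fun i => μ (b i)
  obtain ⟨i, hi⟩ := Function.ne_iff.1 hs
  set σ := ∑ j, (‖s‖⁻¹ * s j) • b j
  have hσ : ‖σ‖ ≤ 1 := by
    refine (norm_sum_smul_le_of_pairwise_disjoint_support hb hbd _).trans ?_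
    change ‖‖s‖⁻¹ • s‖ ≤ 1
    rw [norm_smul, norm_inv, norm_norm, inv_mul_cancel₀ (norm_ne_zero_iff.2 hs)]
  have hμσ : μ σ = 0 := by
    refine eq_zero_of_mem_extremePoints_normMinimizers hwp ?_
      (norm_add_comp_mul_add_norm_sub_comp_mul_le wp.1 hσ)
    simpa [σ, mul_smul, ← Finset.smul_sum] using (admissibleDirections N f B).smul_mem ‖s‖⁻¹ hsA
  have hσg : σ * g i = (‖s‖⁻¹ * s i) • g i := by
    rw [Finset.sum_mul, Finset.sum_eq_single i
      (fun j _ hji => by rw [smul_mul_assoc, hbg' i j hji.symm, smul_zero]) (by simp),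
      smul_mul_assoc, hbg i]
  have : ‖s‖⁻¹ * s i * wp.1 (g i) = 0 := by
    rw [← smul_eq_mul, ← map_smul, ← hσg]
    exact congr($hμσ (g i))
  simp only [mul_eq_zero, inv_eq_zero, norm_eq_zero, hs, hg i, false_or, or_false] at this
  exact hi this

end DualSupport

noncomputable def nipLinearMap {d : ℕ} (g : C(Torus d, ℝ)) : C(Torus d, ℝ) →ₗ[ℝ] ℝ where
  toFun := nip g
  map_add' h₁ h₂ := by
    have hint : ∀ h : C(Torus d, ℝ), Integrable fun x => g x * h x := fun h =>
      (g * h).continuous.integrable_of_hasCompactSupport (HasCompactSupport.of_compactSpace _)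
    simp only [nip, ContinuousMap.add_apply, mul_add, integral_add (hint h₁) (hint h₂)]
  map_smul' c h := by
    simp only [nip, ContinuousMap.smul_apply, smul_eq_mul, mul_left_comm _ c, integral_const_mul,
      RingHom.id_apply]

theorem fisher_jerome_torus_general
    (d : ℕ) (F : Finset (Fin d → ℤ))
    (N : Submodule ℝ C(Torus d, ℝ))
    (hN : N = Submodule.span ℝ
      ((fun k => trigCos k) '' (F : Set (Fin d → ℤ)) ∪
        (fun k => trigSin k) '' (F : Set (Fin d → ℤ))))
    (M : ℕ)
    (f q : Fin M → C(Torus d, ℝ))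
    (hinj : ∀ p ∈ N, (∀ m, nip (q m) p = 0) → p = 0)
    (z₀ : Fin M → ℝ)
    (W : Set (StrongDual ℝ C(Torus d, ℝ)))
    (hW : W = {w | ∀ φ ∈ N, w φ = 0})
    (S : Set (StrongDual ℝ C(Torus d, ℝ) × C(Torus d, ℝ)))
    (hS : S = {wp | wp.1 ∈ W ∧ wp.2 ∈ N ∧ ∀ m, wp.1 (f m) + nip (q m) wp.2 = z₀ m})
    (hfeas : S.Nonempty)
    (V : Set (StrongDual ℝ C(Torus d, ℝ) × C(Torus d, ℝ)))
    (hV : V = {wp ∈ S | ∀ wp' ∈ S, ‖wp.1‖ ≤ ‖wp'.1‖}) :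
    V.Nonempty ∧ Convex ℝ V ∧
      IsCompact ((fun wp : StrongDual ℝ C(Torus d, ℝ) × C(Torus d, ℝ) =>
        (StrongDual.toWeakDual wp.1, wp.2)) '' V) ∧
      ∀ wp ∈ Set.extremePoints ℝ V, ∃ K : ℕ, K ≤ M ∧
        ∃ (a : Fin K → ℝ) (x : Fin K → Torus d),
          Function.Injective x ∧ wp.1 = ∑ k, a k • dirac (x k) := by
  have : FiniteDimensional ℝ N := hN ▸ FiniteDimensional.span_of_finite ℝ
    ((F.finite_toSet.image _).union (F.finite_toSet.image _))
  let B : C(Torus d, ℝ) →ₗ[ℝ] Fin M → ℝ := LinearMap.pi fun m => nipLinearMap (q m)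
  have hB : Disjoint N (LinearMap.ker B) :=
    LinearMap.disjoint_ker.2 fun p hp h => hinj p hp (congrFun h)
  obtain rfl : S = feasibleSet N f B z₀ := by rw [hS, hW]; rfl
  obtain rfl : V = normMinimizers (feasibleSet N f B z₀) := hV
  obtain ⟨wp₀, hwp₀⟩ := nonempty_normMinimizers_feasibleSet hB hfeas
  refine ⟨⟨wp₀, hwp₀⟩, convex_normMinimizers convex_feasibleSet,
    normMinimizers_eq_of_mem hwp₀ ▸ isCompact_image_toWeakDual_feasibleSet hB _, fun wp hwp => ?_⟩
  obtain ⟨K, hK, x, hx, hxD⟩ := Set.exists_injective_fin_of_forall_card_le fun _ ht =>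
    card_le_of_subset_dualSupport hB hwp ht
  obtain ⟨a, ha⟩ := exists_eq_sum_smul_evalCLM_of_dualSupport_subset hx hxD.ge
  exact ⟨K, hK, a, x, hx, ha⟩

/-- Fisher–Jerome-type theorem on the torus: minimizing the total-variation norm of `w`
over the affine feasibility set yields a nonempty, convex, weak*-compact set of
minimizers whose extreme points have Dirac-stream first components with at most `M`
knots. -/
theorem fisher_jerome_torus
    (d : ℕ) (hd : 1 ≤ d) (F : Finset (Fin d → ℤ)) (hF : ∀ k ∈ F, -k ∈ F)
    (N : Submodule ℝ C(Torus d, ℝ))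
    (hN : N = Submodule.span ℝ
      ((fun k => trigCos k) '' (F : Set (Fin d → ℤ)) ∪
        (fun k => trigSin k) '' (F : Set (Fin d → ℤ))))
    (M : ℕ) (hM : Module.finrank ℝ N ≤ M)
    (f q : Fin M → C(Torus d, ℝ)) (hq : ∀ m, q m ∈ N)
    (hindep : LinearIndependent ℝ
      (fun m : Fin M => ((f m, q m) : C(Torus d, ℝ) × C(Torus d, ℝ))))
    (hf : ∀ m, ∀ k ∈ F,
      (∫ x : Torus d, f m x * trigCos k x) = 0 ∧
      (∫ x : Torus d, f m x * trigSin k x) = 0)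
    (hinj : ∀ p ∈ N, (∀ m, nip (q m) p = 0) → p = 0)
    (z₀ : Fin M → ℝ)
    (W : Set (StrongDual ℝ C(Torus d, ℝ)))
    (hW : W = {w | ∀ φ ∈ N, w φ = 0})
    (S : Set (StrongDual ℝ C(Torus d, ℝ) × C(Torus d, ℝ)))
    (hS : S = {wp | wp.1 ∈ W ∧ wp.2 ∈ N ∧ ∀ m, wp.1 (f m) + nip (q m) wp.2 = z₀ m})
    (hfeas : S.Nonempty)
    (V : Set (StrongDual ℝ C(Torus d, ℝ) × C(Torus d, ℝ)))
    (hV : V = {wp ∈ S | ∀ wp' ∈ S, ‖wp.1‖ ≤ ‖wp'.1‖}) :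
    V.Nonempty ∧ Convex ℝ V ∧
      IsCompact ((fun wp : StrongDual ℝ C(Torus d, ℝ) × C(Torus d, ℝ) =>
        (StrongDual.toWeakDual wp.1, wp.2)) '' V) ∧
      ∀ wp ∈ Set.extremePoints ℝ V, ∃ K : ℕ, K ≤ M ∧
        ∃ (a : Fin K → ℝ) (x : Fin K → Torus d),
          Function.Injective x ∧ wp.1 = ∑ k, a k • dirac (x k) :=
  fisher_jerome_torus_general d F N hN M f q hinj z₀ W hW S hS hfeas V hV
end

section
/- Let γ ∈ ℝ with 1/2 < γ ≤ 1. Then there is no continuous function h on the circle ℝ/2πℤ whose Fourier coefficients with respect to the normalized Haar probability measure satisfy ĥ(k) = |k|^{-γ} for all k ≠ 0 and ĥ(0) = 0. (This is the assertion, proved within Proposition 6.3, that the Green's function of the fractional Laplacian (−Δ)^{γ/2} is discontinuous for 1/2 < γ ≤ 1, so that (−Δ)^{γ/2} is not sampling-admissible for such γ.) -/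
/-!
Let `D_n = ∑_{j<n} e_j`. For a continuous `g`, the integral of `g |D_n|²` is the sum of the
`ĝ(k - j)` over `j, k < n`, and `∫ |D_n|² = n`; so this double sum is at most `‖g‖_∞ n`. If
`Re ĝ ≥ 0` and `Re ĝ(m) ≥ 1/m` for `m ≥ 1` (as for `|m|^{-γ}` with `γ ≤ 1`), the double sum for
`n = 2M + 1` is at least `(M + 1) H_M`, so the harmonic numbers `H_M` would stay below
`2‖g‖_∞`.
-/

open scoped Real
open MeasureTheory

open Finset

lemma sum_one_div_le_sum_sub (c : ℤ → ℝ) (hc₀ : ∀ m, 0 ≤ c m)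
    (hc : ∀ m : ℕ, 1 / (m + 1 : ℝ) ≤ c (m + 1)) {M j : ℕ} (hj : j ≤ M) :
    ∑ i ∈ range M, 1 / (i + 1 : ℝ) ≤ ∑ k ∈ range (2 * M + 1), c ((k : ℤ) - j) := by
  have hsub : Ico (j + 1) (j + 1 + M) ⊆ range (2 * M + 1) := by
    intro k hk
    simp only [mem_Ico, mem_range] at hk ⊢
    omega
  calc ∑ i ∈ range M, 1 / (i + 1 : ℝ)
      ≤ ∑ i ∈ range M, c (i + 1) := sum_le_sum fun i _ => by exact_mod_cast hc i
    _ = ∑ k ∈ Ico (j + 1) (j + 1 + M), c ((k : ℤ) - j) := by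
        rw [sum_Ico_eq_sum_range, Nat.add_sub_cancel_left]
        refine sum_congr rfl fun i _ => congrArg c ?_
        push_cast; ring
    _ ≤ ∑ k ∈ range (2 * M + 1), c ((k : ℤ) - j) :=
        sum_le_sum_of_subset_of_nonneg hsub fun k _ _ => hc₀ _

lemma mul_sum_one_div_le_sum_sum_sub (c : ℤ → ℝ) (hc₀ : ∀ m, 0 ≤ c m)
    (hc : ∀ m : ℕ, 1 / (m + 1 : ℝ) ≤ c (m + 1)) (M : ℕ) :
    (M + 1) * ∑ i ∈ range M, 1 / (i + 1 : ℝ) ≤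
      ∑ j ∈ range (2 * M + 1), ∑ k ∈ range (2 * M + 1), c ((k : ℤ) - j) := by
  calc (M + 1) * ∑ i ∈ range M, 1 / (i + 1 : ℝ)
      = ∑ _j ∈ range (M + 1), ∑ i ∈ range M, 1 / (i + 1 : ℝ) := by simp
    _ ≤ ∑ j ∈ range (M + 1), ∑ k ∈ range (2 * M + 1), c ((k : ℤ) - j) :=
        sum_le_sum fun j hj =>
          sum_one_div_le_sum_sub c hc₀ hc (Nat.lt_succ_iff.1 (mem_range.1 hj))
    _ ≤ ∑ j ∈ range (2 * M + 1), ∑ k ∈ range (2 * M + 1), c ((k : ℤ) - j) :=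
        sum_le_sum_of_subset_of_nonneg (range_subset_range.2 (by omega))
          fun j _ _ => sum_nonneg fun k _ => hc₀ _

namespace AddCircle

variable {T : ℝ}

noncomputable def oneSidedDirichletKernel (n : ℕ) : C(AddCircle T, ℂ) :=
  ∑ j ∈ range n, fourier (j : ℤ)

lemma sq_norm_oneSidedDirichletKernel (n : ℕ) (x : AddCircle T) :
    (‖oneSidedDirichletKernel n x‖ : ℂ) ^ 2 =
      ∑ j ∈ range n, ∑ k ∈ range n, fourier ((j : ℤ) - k) x := by
  simp only [oneSidedDirichletKernel, ContinuousMap.coe_sum, Finset.sum_apply]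
  rw [← Complex.conj_mul', map_sum, Finset.sum_mul_sum, Finset.sum_comm]
  refine sum_congr rfl fun j _ => sum_congr rfl fun k _ => ?_
  rw [← fourier_neg, ← fourier_add, neg_add_eq_sub]

variable [Fact (0 < T)]

lemma integral_mul_sq_norm_oneSidedDirichletKernel (g : C(AddCircle T, ℂ)) (n : ℕ) :
    ∫ x, g x * (‖oneSidedDirichletKernel n x‖ : ℂ) ^ 2 ∂haarAddCircle =
      ∑ j ∈ range n, ∑ k ∈ range n, fourierCoeff g ((k : ℤ) - j) := by
  have integrable (m : ℤ) : Integrable (fun x => g x * fourier m x) haarAddCircle :=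
    (g.continuous.mul (fourier m).continuous).integrable_of_hasCompactSupport
      (.of_compactSpace _)
  simp only [sq_norm_oneSidedDirichletKernel, mul_sum]
  rw [integral_finsetSum _ fun j _ => integrable_finsetSum _ fun k _ => integrable _]
  refine sum_congr rfl fun j _ => ?_
  rw [integral_finsetSum _ fun k _ => integrable _]
  simp only [fourierCoeff, neg_sub, smul_eq_mul, mul_comm]

lemma integral_sq_norm_oneSidedDirichletKernel (n : ℕ) :
    ∫ x, ‖oneSidedDirichletKernel n x‖ ^ 2 ∂(haarAddCircle (T := T)) = n := by
  have h := integral_mul_sq_norm_oneSidedDirichletKernel (fourier (T := T) 0) n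
  simp only [fourier_zero, one_mul, fourierCoeff_fourier, Pi.single_apply, sub_eq_zero,
    Int.natCast_inj, sum_ite_eq'] at h
  rw [← Complex.ofReal_inj, ← integral_complex_ofReal]
  push_cast
  rw [h, sum_congr rfl fun j hj => if_pos hj]
  simp

lemma norm_sum_sum_fourierCoeff_sub_le (g : C(AddCircle T, ℂ)) (n : ℕ) :
    ‖∑ j ∈ range n, ∑ k ∈ range n, fourierCoeff g ((k : ℤ) - j)‖ ≤ ‖g‖ * n := by
  have hD := (oneSidedDirichletKernel (T := T) n).continuous
  calc ‖∑ j ∈ range n, ∑ k ∈ range n, fourierCoeff g ((k : ℤ) - j)‖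
      = ‖∫ x, g x * (‖oneSidedDirichletKernel n x‖ : ℂ) ^ 2 ∂haarAddCircle‖ := by
        rw [integral_mul_sq_norm_oneSidedDirichletKernel]
    _ ≤ ∫ x, ‖g x‖ * ‖oneSidedDirichletKernel n x‖ ^ 2 ∂haarAddCircle :=
        norm_integral_le_of_norm_le
          ((g.continuous.norm.mul (hD.norm.pow 2)).integrable_of_hasCompactSupport
            (.of_compactSpace _))
          (.of_forall fun x => by simp)
    _ ≤ ∫ x, ‖g‖ * ‖oneSidedDirichletKernel n x‖ ^ 2 ∂haarAddCircle :=
        integral_mono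
          ((g.continuous.norm.mul (hD.norm.pow 2)).integrable_of_hasCompactSupport
            (.of_compactSpace _))
          ((continuous_const.mul (hD.norm.pow 2)).integrable_of_hasCompactSupport
            (.of_compactSpace _))
          fun x => by gcongr; exact g.norm_coe_le_norm x
    _ = ‖g‖ * n := by rw [integral_const_mul, integral_sq_norm_oneSidedDirichletKernel]

lemma exists_re_fourierCoeff_lt_one_div (g : C(AddCircle T, ℂ))
    (hg : ∀ m, 0 ≤ (fourierCoeff g m).re) :
    ∃ m : ℕ, (fourierCoeff g (m + 1)).re < 1 / (m + 1) := by
  by_contra! hc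
  have bounded (M : ℕ) : ∑ i ∈ range M, 1 / (i + 1 : ℝ) ≤ 2 * ‖g‖ := by
    have h := calc
      (M + 1) * ∑ i ∈ range M, 1 / (i + 1 : ℝ)
          ≤ ∑ j ∈ range (2 * M + 1), ∑ k ∈ range (2 * M + 1),
              (fourierCoeff g ((k : ℤ) - j)).re :=
            mul_sum_one_div_le_sum_sum_sub _ hg hc M
      _ = (∑ j ∈ range (2 * M + 1), ∑ k ∈ range (2 * M + 1),
              fourierCoeff g ((k : ℤ) - j)).re := by
            simp only [Complex.re_sum]
      _ ≤ ‖g‖ * (2 * M + 1 : ℕ) :=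
            (Complex.re_le_norm _).trans (norm_sum_sum_fourierCoeff_sub_le g _)
    push_cast at h
    nlinarith [norm_nonneg g]
  obtain ⟨M, hM⟩ := (Real.tendsto_sum_range_one_div_nat_succ_atTop.eventually_gt_atTop
    (2 * ‖g‖)).exists
  exact (bounded M).not_gt hM

end AddCircle

theorem no_continuous_function_with_fourierCoeff_abs_rpow_general (γ : ℝ) (hγ₂ : γ ≤ 1) :
    ¬ ∃ h : C(AddCircle (2 * π), ℂ),
        (∀ k : ℤ, k ≠ 0 → fourierCoeff (⇑h) k = ((|(k : ℝ)| ^ (-γ) : ℝ) : ℂ)) ∧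
        fourierCoeff (⇑h) 0 = 0 := by
  rintro ⟨h, hk, h0⟩
  have hnonneg (m : ℤ) : 0 ≤ (fourierCoeff h m).re := by
    rcases eq_or_ne m 0 with rfl | hm
    · simp [h0]
    · rw [hk m hm, Complex.ofReal_re]
      positivity
  obtain ⟨m, hm⟩ := AddCircle.exists_re_fourierCoeff_lt_one_div h hnonneg
  refine hm.not_ge ?_
  rw [hk _ (by omega), Complex.ofReal_re, one_div, ← Real.rpow_neg_one]
  push_cast
  rw [abs_of_pos (by positivity)]
  exact Real.rpow_le_rpow_of_exponent_le (by simp) (by linarith)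

/-- For `1/2 < γ ≤ 1`, there is no continuous function on the circle `ℝ/2πℤ` whose
Fourier coefficients (w.r.t. the normalized Haar probability measure) are `|k|^{-γ}` for
`k ≠ 0` and `0` for `k = 0`.  Hence the Green's function of the fractional Laplacian
`(−Δ)^{γ/2}` is discontinuous for such `γ`. -/
theorem no_continuous_function_with_fourierCoeff_abs_rpow (γ : ℝ)
    (hγ₁ : 1 / 2 < γ) (hγ₂ : γ ≤ 1) :
    ¬ ∃ h : C(AddCircle (2 * π), ℂ),
        (∀ k : ℤ, k ≠ 0 → fourierCoeff (⇑h) k = ((|(k : ℝ)| ^ (-γ) : ℝ) : ℂ)) ∧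
        fourierCoeff (⇑h) 0 = 0 :=
  no_continuous_function_with_fourierCoeff_abs_rpow_general γ hγ₂
end
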